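/- For every integer n ≥ 1 and every real univariate polynomial f of degree at most 2n−1, the Gauss–Chebyshev quadrature formula is exact: ∫_{−1}^{1} f(x) w(x) dx = (1/n) Σ_{k=1}^{n} f(cos((2k−1)π/(2n))). -/

import Mathlib

open Real MeasureTheory Polynomial.Chebyshev

theorem setIntegral_Ioo_chebyshev_weight_eq_integral_measureT (g : ℝ → ℝ) :
    ∫ x in Set.Ioo (-1 : ℝ) 1, g x * (π * √(1 - x ^ 2))⁻¹ = π⁻¹ * ∫ x, g x ∂measureT := by
  rw [integral_measureT, intervalIntegral.integral_of_le (by norm_num),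
    integral_Ioc_eq_integral_Ioo, ← integral_const_mul]
  congr 1 with x
  rw [mul_inv, sqrt_inv]
  ring

theorem sum_Icc_cos_odd_mul_pi_div_eq_sum_range (n : ℕ) (g : ℝ → ℝ) :
    ∑ k ∈ Finset.Icc 1 n, g (cos ((2 * (k : ℝ) - 1) * π / (2 * n))) =
      ∑ i ∈ Finset.range n, g (cos ((2 * i + 1) / (2 * n) * π)) := by
  rw [← Finset.Ico_succ_right_eq_Icc, Finset.sum_Ico_eq_sum_range, Order.succ_eq_add_one,
    Nat.add_sub_cancel]
  refine Finset.sum_congr rfl fun i _ => ?_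
  push_cast
  ring_nf

theorem gauss_chebyshev_quadrature (n : ℕ) (hn : 1 ≤ n)
    (f : Polynomial ℝ) (hf : f.natDegree ≤ 2 * n - 1) :
    ∫ x in Set.Ioo (-1 : ℝ) 1, f.eval x * (π * Real.sqrt (1 - x ^ 2))⁻¹ =
      (1 / (n : ℝ)) *
        ∑ k ∈ Finset.Icc 1 n, f.eval (Real.cos ((2 * (k : ℝ) - 1) * π / (2 * n))) := by
  have hdeg : f.degree < 2 * n :=
    f.degree_le_natDegree.trans_lt (by exact_mod_cast (by omega : f.natDegree < 2 * n))
  rw [setIntegral_Ioo_chebyshev_weight_eq_integral_measureT,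
    integral_eq_sumZeroes (by omega) hdeg, sumZeroes,
    sum_Icc_cos_odd_mul_pi_div_eq_sum_range n f.eval]
  field_simp
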